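/- Let G be a finite semi-extraspecial 2-group with |G : Z(G)| = 2^{2a} possessing an automorphism σ of order 2^{2a} − 1. Then Z(G) contains all involutions of G: every x ∈ G with x² = 1 lies in Z(G). -/

import Mathlib

/-- A finite `p`-group `G` is extraspecial if `|Z(G)| = p` and `Z(G) = [G,G]`. -/
def IsExtraspecial (p : ℕ) (G : Type*) [Group G] : Prop :=
  Nat.card (Subgroup.center G) = p ∧ Subgroup.center G = commutator G

/-- A finite `p`-group `G` is semi-extraspecial if `G/N` is extraspecial for every
maximal subgroup `N` of the center `Z(G)`. -/
def IsSemiExtraspecial (p : ℕ) (G : Type*) [Group G] : Prop :=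
  ∀ (N : Subgroup G) [N.Normal], N ≤ Subgroup.center G →
    IsCoatom (N.subgroupOf (Subgroup.center G)) →
    IsExtraspecial p (G ⧸ N)

/-!
Passing to the extraspecial quotients `G/N` shows that `Z(G) = [G,G]` has exponent `2` and
that `V = G/Z(G)` is elementary abelian; since `σ` acts trivially on `[G,G]` as soon as it acts
trivially on `V`, the induced automorphism of `V` still has the odd order `|V| - 1`.
An automorphism `α` of odd order of an elementary abelian `2`-group `V` has order at most
`|V| - 1`: if the orbit of `v ≠ 1` generates `V`, the order of `α` divides the orbit length;
otherwise the orbit generates a proper invariant subgroup `W`, and induction on `W` and `V/W`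
bounds the order by `(|W| - 1)(|V/W| - 1) < |V| - 1`. So when the order is `|V| - 1`, every
orbit of a nontrivial element is all of `V ∖ {1}`. Hence, if an involution `x` were not central,
every element of `G ∖ Z(G)` would lie in a coset `σᵏ(x) Z(G)` of an involution, so `G` would have
exponent `2` and be abelian.
-/

open Subgroup MulAction
open scoped commutatorElement Pointwise

universe u

section Group

variable {G : Type*} [Group G]

theorem Subgroup.normal_of_le_center {N : Subgroup G} (h : N ≤ center G) : N.Normal :=
  ⟨fun n hn g => by rwa [mem_center_iff.mp (h hn) g, mul_inv_cancel_right]⟩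

theorem commutatorElement_mem_commutator (g h : G) : ⁅g, h⁆ ∈ commutator G :=
  commutator_mem_commutator (mem_top g) (mem_top h)

theorem commutatorElement_pow_left {g h : G} (hc : ⁅g, h⁆ ∈ center G) (n : ℕ) :
    ⁅g ^ n, h⁆ = ⁅g, h⁆ ^ n := by
  induction n with
  | zero => simp
  | succ n ih =>
    calc ⁅g ^ (n + 1), h⁆ = g * ⁅g ^ n, h⁆ * g⁻¹ * ⁅g, h⁆ := by
          simp only [pow_succ', commutatorElement_def]; group
      _ = ⁅g, h⁆ ^ (n + 1) := by
          rw [ih, mem_center_iff.mp (pow_mem hc n) g, mul_inv_cancel_right, pow_succ]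

theorem commutatorElement_mul_left_of_mem_center (g h : G) {z : G} (hz : z ∈ center G) :
    ⁅g * z, h⁆ = ⁅g, h⁆ := by
  rw [commutatorElement_def, commutatorElement_def, mul_assoc g z h, ← mem_center_iff.mp hz h]
  group

theorem commutatorElement_mul_mul_of_mem_center (g h : G) {y z : G} (hy : y ∈ center G)
    (hz : z ∈ center G) : ⁅g * y, h * z⁆ = ⁅g, h⁆ := by
  rw [commutatorElement_mul_left_of_mem_center _ _ hy, ← commutatorElement_inv,
    commutatorElement_mul_left_of_mem_center _ _ hz, commutatorElement_inv]

theorem Subgroup.mem_center_of_forall_sq_eq_one (hG : ∀ g : G, g ^ 2 = 1) (z : G) :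
    z ∈ center G :=
  mem_center_iff.mpr fun g =>
    (Commute.of_orderOf_dvd_two (fun g => orderOf_dvd_of_pow_eq_one (hG g)) g z).eq

theorem pow_eq_one_of_inv_mul_mem_center {p : ℕ} (hZ : ∀ z ∈ center G, z ^ p = 1) {g y : G}
    (hy : y ^ p = 1) (h : y⁻¹ * g ∈ center G) : g ^ p = 1 := by
  have hcomm : Commute y (y⁻¹ * g) := mem_center_iff.mp h y
  rw [← mul_inv_cancel_left y g, hcomm.mul_pow, hy, hZ _ h, one_mul]

variable [Finite G]

theorem Subgroup.exists_le_center_isCoatom_subgroupOf [Nontrivial (center G)] :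
    ∃ N : Subgroup G, N ≤ center G ∧ IsCoatom (N.subgroupOf (center G)) := by
  obtain ⟨K, hK⟩ := IsCoatomic.exists_coatom (Subgroup (center G))
  refine ⟨K.map (center G).subtype, map_subtype_le K, ?_⟩
  rwa [subgroupOf, comap_map_eq_self_of_injective (center G).subtype_injective]

theorem Subgroup.card_lt_card_of_ne_top {H : Subgroup G} (h : H ≠ ⊤) :
    Nat.card H < Nat.card G := by
  rw [← card_mul_index H]
  exact lt_mul_of_one_lt_right Nat.card_pos (one_lt_index_of_ne_top h)

theorem Subgroup.index_lt_card_of_ne_bot {H : Subgroup G} (h : H ≠ ⊥) : H.index < Nat.card G := by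
  rw [← card_mul_index H]
  exact lt_mul_of_one_lt_left (Nat.pos_of_ne_zero index_ne_zero_of_finite)
    ((one_lt_card_iff_ne_bot H).mpr h)

end Group

namespace IsExtraspecial

variable {p : ℕ} {Q : Type*} [Group Q]

theorem commutatorElement_mem_center (hQ : IsExtraspecial p Q) (g h : Q) : ⁅g, h⁆ ∈ center Q :=
  hQ.2 ▸ commutatorElement_mem_commutator g h

theorem pow_mem_center (hQ : IsExtraspecial p Q) (g : Q) : g ^ p ∈ center Q := by
  refine mem_center_iff.mpr fun h => (commutatorElement_eq_one_iff_commute.mp ?_).eq.symm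
  have hc := hQ.commutatorElement_mem_center g h
  rw [commutatorElement_pow_left hc, ← hQ.1]
  exact congrArg Subtype.val (pow_card_eq_one' (x := (⟨_, hc⟩ : center Q)))

end IsExtraspecial

namespace IsSemiExtraspecial

variable {p : ℕ} {G : Type*} [Group G] (hG : IsSemiExtraspecial p G) (hp : p.Prime)
include hG hp

theorem map_center_eq_center {N : Subgroup G} [N.Normal] (hNZ : N ≤ center G)
    (hN : IsCoatom (N.subgroupOf (center G))) :
    (center G).map (QuotientGroup.mk' N) = center (G ⧸ N) := by
  have hE := hG N hNZ hN
  have hle : (center G).map (QuotientGroup.mk' N) ≤ center (G ⧸ N) := by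
    rintro _ ⟨z, hz, rfl⟩
    refine mem_center_iff.mpr fun q => ?_
    induction q using QuotientGroup.induction_on with
    | H g => exact congrArg _ (mem_center_iff.mp hz g)
  have hbot : (center G).map (QuotientGroup.mk' N) ≠ ⊥ := by
    obtain ⟨⟨z, hz⟩, hzN⟩ := SetLike.exists_not_mem_of_ne_top _ hN.1 rfl
    intro h
    have hz1 := h ▸ mem_map_of_mem (QuotientGroup.mk' N) hz
    rw [mem_bot, QuotientGroup.mk'_apply, QuotientGroup.eq_one_iff] at hz1
    exact hzN hz1
  have : Finite (center (G ⧸ N)) := Nat.finite_of_card_ne_zero (hE.1 ▸ hp.ne_zero)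
  refine eq_of_le_of_card_ge hle ?_
  have hdvd := card_dvd_of_le hle
  rw [hE.1] at hdvd ⊢
  rcases hp.eq_one_or_self_of_dvd _ hdvd with h | h
  · exact absurd (card_eq_one.mp h) hbot
  · exact h.ge

theorem mem_center_of_mk_mem_center {N : Subgroup G} [N.Normal] (hNZ : N ≤ center G)
    (hN : IsCoatom (N.subgroupOf (center G))) {g : G}
    (hg : (g : G ⧸ N) ∈ center (G ⧸ N)) : g ∈ center G := by
  rw [← hG.map_center_eq_center hp hNZ hN] at hg
  obtain ⟨z, hz, hzg⟩ := hg
  rw [QuotientGroup.mk'_apply, QuotientGroup.eq] at hzg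
  simpa using mul_mem hz (hNZ hzg)

variable [Finite G] [Nontrivial (center G)]

theorem commutatorElement_mem_center (g h : G) : ⁅g, h⁆ ∈ center G := by
  obtain ⟨N, hNZ, hN⟩ := exists_le_center_isCoatom_subgroupOf (G := G)
  have := normal_of_le_center hNZ
  refine hG.mem_center_of_mk_mem_center hp hNZ hN ?_
  rw [← QuotientGroup.mk'_apply, map_commutatorElement]
  exact (hG N hNZ hN).commutatorElement_mem_center _ _

theorem pow_mem_center (g : G) : g ^ p ∈ center G := by
  obtain ⟨N, hNZ, hN⟩ := exists_le_center_isCoatom_subgroupOf (G := G)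
  have := normal_of_le_center hNZ
  refine hG.mem_center_of_mk_mem_center hp hNZ hN ?_
  rw [QuotientGroup.mk_pow]
  exact (hG N hNZ hN).pow_mem_center _

theorem commutator_le_center : commutator G ≤ center G := by
  rw [_root_.commutator_def, commutator_le]
  exact fun g _ h _ => hG.commutatorElement_mem_center hp g h

theorem center_le_commutator : center G ≤ commutator G := by
  by_contra hZ
  obtain ⟨K, hK, hle⟩ : ∃ K, IsCoatom K ∧ (commutator G).subgroupOf (center G) ≤ K :=
    (eq_top_or_exists_le_coatom _).resolve_left (mt subgroupOf_eq_top.mp hZ)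
  set N := K.map (center G).subtype
  have hNZ : N ≤ center G := map_subtype_le K
  have hN : IsCoatom (N.subgroupOf (center G)) := by
    rwa [subgroupOf, comap_map_eq_self_of_injective (center G).subtype_injective]
  have := normal_of_le_center hNZ
  have hcomm : commutator (G ⧸ N) = ⊥ := by
    rw [eq_bot_iff, _root_.commutator_def, commutator_le]
    intro a _ b _
    induction a using QuotientGroup.induction_on with | H g =>
    induction b using QuotientGroup.induction_on with | H h =>
    rw [mem_bot, ← QuotientGroup.mk'_apply, ← QuotientGroup.mk'_apply, ← map_commutatorElement,
      QuotientGroup.mk'_apply, QuotientGroup.eq_one_iff]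
    exact ⟨⟨_, hG.commutatorElement_mem_center hp g h⟩,
      hle (commutatorElement_mem_commutator g h), rfl⟩
  obtain ⟨hcard, hZ⟩ := hG N hNZ hN
  rw [hZ, hcomm, card_bot] at hcard
  exact hp.one_lt.ne hcard

theorem pow_eq_one_of_mem_center {z : G} (hz : z ∈ center G) : z ^ p = 1 := by
  rw [le_antisymm (hG.center_le_commutator hp) (hG.commutator_le_center hp),
    commutator_eq_closure] at hz
  induction hz using closure_induction with
  | mem _ hc =>
    obtain ⟨g, h, rfl⟩ := hc
    rw [← commutatorElement_pow_left (hG.commutatorElement_mem_center hp g h),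
      commutatorElement_eq_one_iff_commute]
    exact (mem_center_iff.mp (hG.pow_mem_center hp g) h).symm
  | one => exact one_pow p
  | mul x y hx _ hxp hyp =>
    rw [← commutator_eq_closure] at hx
    have hxy : Commute x y := (mem_center_iff.mp (hG.commutator_le_center hp hx) y).symm
    rw [hxy.mul_pow, hxp, hyp, one_mul]
  | inv x _ hxp => rw [inv_pow, hxp, inv_one]

end IsSemiExtraspecial

namespace MulAut

section Induced

variable {V : Type*} [Group V]

def restrict (α : MulAut V) {W : Subgroup V} (hW : W.map (α : V →* V) = W) : MulAut W :=
  (α.subgroupMap W).trans (MulEquiv.subgroupCongr hW)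

theorem restrict_pow_apply (α : MulAut V) {W : Subgroup V} (hW : W.map (α : V →* V) = W)
    (k : ℕ) (w : W) : ((α.restrict hW ^ k) w : V) = (α ^ k) w := by
  induction k generalizing w with
  | zero => rfl
  | succ k ih => rw [pow_succ, pow_succ, mul_apply, mul_apply, ih]; rfl

def quotient (α : MulAut V) {W : Subgroup V} [W.Normal] (hW : W.map (α : V →* V) = W) :
    MulAut (V ⧸ W) :=
  QuotientGroup.congr W W α hW

theorem quotient_pow_mk (α : MulAut V) {W : Subgroup V} [W.Normal]
    (hW : W.map (α : V →* V) = W) (k : ℕ) (g : V) :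
    (α.quotient hW ^ k) (g : V ⧸ W) = ((α ^ k) g : V) := by
  induction k generalizing g with
  | zero => rfl
  | succ k ih => rw [pow_succ, pow_succ, mul_apply, mul_apply, ← ih]; rfl

theorem orderOf_restrict_dvd (α : MulAut V) {W : Subgroup V} (hW : W.map (α : V →* V) = W) :
    orderOf (α.restrict hW) ∣ orderOf α :=
  orderOf_dvd_of_pow_eq_one <| MulEquiv.ext fun w => Subtype.ext <| by
    rw [restrict_pow_apply, pow_orderOf_eq_one]; rfl

theorem orderOf_quotient_dvd (α : MulAut V) {W : Subgroup V} [W.Normal]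
    (hW : W.map (α : V →* V) = W) : orderOf (α.quotient hW) ∣ orderOf α :=
  orderOf_dvd_of_pow_eq_one <| MulEquiv.ext fun q => by
    induction q using QuotientGroup.induction_on with
    | H g => rw [quotient_pow_mk, pow_orderOf_eq_one]; rfl

theorem sq_eq_one_of_forall_apply_eq {W : Subgroup V} (hW : ∀ w ∈ W, w ^ 2 = 1) {τ : MulAut V}
    (hfix : ∀ w ∈ W, τ w = w) (hmem : ∀ g, g⁻¹ * τ g ∈ W) : τ ^ 2 = 1 := by
  ext g
  obtain ⟨w, hw, hτg⟩ : ∃ w ∈ W, τ g = g * w := ⟨_, hmem g, (mul_inv_cancel_left g _).symm⟩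
  rw [pow_two, mul_apply, hτg, map_mul, hτg, hfix w hw, mul_assoc, ← pow_two, hW w hw, mul_one,
    one_apply]

theorem orderOf_dvd_of_forall_pow_apply_eq {W : Subgroup V} (hW : ∀ w ∈ W, w ^ 2 = 1)
    {α : MulAut V} (hα : Odd (orderOf α)) {l : ℕ} (hfix : ∀ w ∈ W, (α ^ l) w = w)
    (hmem : ∀ g, g⁻¹ * (α ^ l) g ∈ W) : orderOf α ∣ l := by
  refine hα.coprime_two_right.dvd_of_dvd_mul_left (orderOf_dvd_of_pow_eq_one ?_)
  rw [mul_comm, pow_mul]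
  exact sq_eq_one_of_forall_apply_eq hW hfix hmem

theorem apply_eq_of_mem_commutator {τ : MulAut V} (hτ : ∀ g, g⁻¹ * τ g ∈ center V) {c : V}
    (hc : c ∈ commutator V) : τ c = c := by
  suffices commutator V ≤ MonoidHom.eqLocus (τ : V →* V) (MonoidHom.id V) from this hc
  rw [_root_.commutator_def, commutator_le]
  intro g _ h _
  have hτ' : ∀ g, τ g = g * (g⁻¹ * τ g) := fun g => (mul_inv_cancel_left g _).symm
  show τ ⁅g, h⁆ = ⁅g, h⁆
  rw [map_commutatorElement, hτ' g, hτ' h,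
    commutatorElement_mul_mul_of_mem_center _ _ (hτ g) (hτ h)]

theorem map_center (σ : MulAut V) : (center V).map (σ : V →* V) = center V :=
  characteristic_iff_map_eq.mp inferInstance σ

theorem orderOf_quotient_center (hZ : center V ≤ commutator V)
    (hZ2 : ∀ z ∈ center V, z ^ 2 = 1) {σ : MulAut V} (hσ : Odd (orderOf σ)) :
    orderOf (σ.quotient σ.map_center) = orderOf σ := by
  refine Nat.dvd_antisymm (orderOf_quotient_dvd σ _) ?_
  have hmem : ∀ g, g⁻¹ * (σ ^ orderOf (σ.quotient σ.map_center)) g ∈ center V := fun g => by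
    have h := quotient_pow_mk σ σ.map_center (orderOf (σ.quotient σ.map_center)) g
    rwa [pow_orderOf_eq_one, one_apply, QuotientGroup.eq] at h
  exact orderOf_dvd_of_forall_pow_apply_eq hZ2 hσ
    (fun w hw => apply_eq_of_mem_commutator hmem (hZ hw)) hmem

end Induced

section Orbit

variable {V : Type u} [Group V] (α : MulAut V)

theorem map_closure_orbit_zpowers (v : V) :
    (closure (orbit (zpowers α) v)).map (α : V →* V) = closure (orbit (zpowers α) v) := by
  rw [MonoidHom.map_closure]
  congr 1
  exact smul_orbit (⟨α, mem_zpowers α⟩ : zpowers α) v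

theorem orderOf_dvd_ncard_orbit_zpowers {v : V} (h : closure (orbit (zpowers α) v) = ⊤) :
    orderOf α ∣ (orbit (zpowers α) v).ncard := by
  have : (stabilizer (zpowers α) v).Normal := normal_of_isMulCommutative _
  have hv : (α ^ (orbit (zpowers α) v).ncard) v = v := by
    have := pow_index_mem (stabilizer (zpowers α) v) ⟨α, mem_zpowers α⟩
    rwa [index_stabilizer] at this
  refine orderOf_dvd_of_pow_eq_one (MulEquiv.toMonoidHom_injective ?_)
  refine MonoidHom.eq_of_eqOn_dense h ?_
  rintro _ ⟨⟨β, hβ⟩, rfl⟩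
  obtain ⟨k, rfl⟩ := mem_zpowers_iff.mp hβ
  show (α ^ _ * α ^ k) v = (α ^ k) v
  rw [← zpow_natCast, ← zpow_add, add_comm, zpow_add, zpow_natCast, mul_apply, hv]

theorem orbit_zpowers_subset_compl_one {v : V} (hv : v ≠ 1) : orbit (zpowers α) v ⊆ {1}ᶜ :=
  Set.subset_compl_singleton_iff.mpr fun ⟨_, hβ⟩ => hv ((MulEquiv.map_eq_one_iff _).mp hβ)

variable [Finite V]

theorem orderOf_le_ncard_orbit_zpowers {v : V} (h : closure (orbit (zpowers α) v) = ⊤) :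
    orderOf α ≤ (orbit (zpowers α) v).ncard :=
  Nat.le_of_dvd ((Set.ncard_pos (Set.toFinite _)).mpr (nonempty_orbit v)) (orderOf_dvd_ncard_orbit_zpowers α h)

theorem ncard_orbit_zpowers_le {v : V} (hv : v ≠ 1) :
    (orbit (zpowers α) v).ncard ≤ Nat.card V - 1 := by
  rw [← Set.ncard_singleton (1 : V), ← Set.ncard_compl]
  exact Set.ncard_le_ncard (orbit_zpowers_subset_compl_one α hv)

end Orbit

section ExponentTwo

variable {V : Type u} [Group V] [Finite V] (hV : ∀ x : V, x ^ 2 = 1) {α : MulAut V}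
  (hα : Odd (orderOf α))
include hV hα

theorem orderOf_add_three_le_of_map_eq {W : Subgroup V} [W.Normal]
    (hW : W.map (α : V →* V) = W) (hbot : W ≠ ⊥) (htop : W ≠ ⊤)
    (hres : orderOf (α.restrict hW) ≤ Nat.card W - 1)
    (hquo : orderOf (α.quotient hW) ≤ Nat.card (V ⧸ W) - 1) :
    orderOf α + 3 ≤ Nat.card V := by
  set l := (orderOf (α.restrict hW)).lcm (orderOf (α.quotient hW))
  have hl : orderOf α ∣ l := by
    refine orderOf_dvd_of_forall_pow_apply_eq (W := W) (fun w _ => hV w) hα (fun w hw => ?_)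
      fun g => ?_
    · have h1 : α.restrict hW ^ l = 1 := orderOf_dvd_iff_pow_eq_one.mp (Nat.dvd_lcm_left _ _)
      simpa [h1] using (restrict_pow_apply α hW l ⟨w, hw⟩).symm
    · have h1 : α.quotient hW ^ l = 1 := orderOf_dvd_iff_pow_eq_one.mp (Nat.dvd_lcm_right _ _)
      have h2 := quotient_pow_mk α hW l g
      rwa [h1, one_apply, QuotientGroup.eq] at h2
  have hpos := Nat.mul_pos (orderOf_pos (α.restrict hW)) (orderOf_pos (α.quotient hW))
  have hle := Nat.le_of_dvd hpos (hl.trans (Nat.lcm_dvd_mul _ _))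
  obtain ⟨c1, hc1⟩ := Nat.exists_eq_add_of_lt ((one_lt_card_iff_ne_bot W).mpr hbot)
  obtain ⟨c2, hc2⟩ := Nat.exists_eq_add_of_lt (one_lt_index_of_ne_top htop)
  rw [← card_mul_index W, hc1, hc2]
  rw [hc1] at hres
  rw [← index_eq_card, hc2] at hquo
  simp only [Nat.add_sub_cancel] at hres hquo
  nlinarith [Nat.mul_le_mul hres hquo]

theorem orderOf_add_three_le_of_closure_orbit_ne_top {v : V} (hv : v ≠ 1)
    (hW : closure (orbit (zpowers α) v) ≠ ⊤)
    (ih : ∀ (U : Type u) [Group U] [Finite U] [Nontrivial U], Nat.card U < Nat.card V →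
      (∀ x : U, x ^ 2 = 1) → ∀ β : MulAut U, Odd (orderOf β) → orderOf β ≤ Nat.card U - 1) :
    orderOf α + 3 ≤ Nat.card V := by
  set W := closure (orbit (zpowers α) v)
  have hWα := map_closure_orbit_zpowers α v
  have hbot : W ≠ ⊥ := by
    intro h
    have hvW : v ∈ W := subset_closure (mem_orbit_self v)
    rw [h, mem_bot] at hvW
    exact hv hvW
  have : W.Normal := normal_of_le_center fun w _ => mem_center_of_forall_sq_eq_one hV w
  have : Nontrivial W := (nontrivial_iff_ne_bot W).mpr hbot
  have : Nontrivial (V ⧸ W) := QuotientGroup.nontrivial_iff.mpr hW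
  have hVW : ∀ q : V ⧸ W, q ^ 2 = 1 := fun q => by
    induction q using QuotientGroup.induction_on with
    | H g => rw [← QuotientGroup.mk_pow, hV, QuotientGroup.mk_one]
  exact orderOf_add_three_le_of_map_eq hV hα hWα hbot hW
    (ih W (card_lt_card_of_ne_top hW) (fun w => Subtype.ext (hV w)) _
      (hα.of_dvd_nat (orderOf_restrict_dvd α hWα)))
    (ih (V ⧸ W) (index_eq_card W ▸ index_lt_card_of_ne_bot hbot) hVW _
      (hα.of_dvd_nat (orderOf_quotient_dvd α hWα)))

end ExponentTwo

theorem orderOf_le_card_sub_one {V : Type u} [Group V] [Finite V] [Nontrivial V]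
    (hV : ∀ x : V, x ^ 2 = 1) {α : MulAut V} (hα : Odd (orderOf α)) :
    orderOf α ≤ Nat.card V - 1 := by
  obtain ⟨v, hv⟩ := exists_ne (1 : V)
  by_cases hW : closure (orbit (zpowers α) v) = ⊤
  · exact (orderOf_le_ncard_orbit_zpowers α hW).trans (ncard_orbit_zpowers_le α hv)
  · have := orderOf_add_three_le_of_closure_orbit_ne_top hV hα hv hW
      fun U _ _ _ hU hU2 _ hβ => orderOf_le_card_sub_one hU2 hβ
    omega
termination_by Nat.card V
decreasing_by exact hU

theorem exists_pow_apply_eq_of_orderOf_eq {V : Type u} [Group V] [Finite V]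
    (hV : ∀ x : V, x ^ 2 = 1) {α : MulAut V} (hα : Odd (orderOf α))
    (hcard : orderOf α = Nat.card V - 1) {v w : V} (hv : v ≠ 1) (hw : w ≠ 1) :
    ∃ k : ℕ, (α ^ k) v = w := by
  by_cases hW : closure (orbit (zpowers α) v) = ⊤
  · have hO : orbit (zpowers α) v = {1}ᶜ := by
      refine Set.eq_of_subset_of_ncard_le (orbit_zpowers_subset_compl_one α hv) ?_
      rw [Set.ncard_compl, Set.ncard_singleton, ← hcard]
      exact orderOf_le_ncard_orbit_zpowers α hW
    have hwO : w ∈ orbit (zpowers α) v := by rw [hO]; exact hw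
    obtain ⟨⟨β, hβ⟩, hβv⟩ := hwO
    obtain ⟨k, rfl⟩ := mem_powers_iff_mem_zpowers.mpr hβ
    exact ⟨k, hβv⟩
  · have := orderOf_add_three_le_of_closure_orbit_ne_top hV hα hv hW
      fun U _ _ _ _ hU2 _ hβ => orderOf_le_card_sub_one hU2 hβ
    omega

end MulAut

/-- Let `G` be a finite semi-extraspecial `2`-group with `|G : Z(G)| = 2^(2a)` possessing
an automorphism of order `2^(2a) - 1`. Then every involution of `G` lies in `Z(G)`. -/
theorem stmt_16 (a : ℕ) (G : Type*) [Group G] [Finite G]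
    (hpG : IsPGroup 2 G) (hses : IsSemiExtraspecial 2 G)
    (hindex : (Subgroup.center G).index = 2 ^ (2 * a))
    (σ : MulAut G) (hσ : orderOf σ = 2 ^ (2 * a) - 1) :
    ∀ x : G, x ^ 2 = 1 → x ∈ Subgroup.center G := by
  intro x hx
  by_contra hxZ
  have : Nontrivial G := ⟨⟨x, 1, fun h => hxZ (h ▸ one_mem _)⟩⟩
  have : Nontrivial (center G) := hpG.center_nontrivial
  have hZ2 : ∀ z ∈ center G, z ^ 2 = 1 := fun _ => hses.pow_eq_one_of_mem_center Nat.prime_two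
  have hodd : Odd (orderOf σ) := by
    have hpos := orderOf_pos σ
    rw [hσ] at hpos ⊢
    refine Nat.Even.sub_odd Nat.one_le_two_pow (Nat.even_pow.mpr ⟨even_two, ?_⟩) odd_one
    intro h
    simp [h] at hpos
  have hσσ := MulAut.orderOf_quotient_center (hses.center_le_commutator Nat.prime_two) hZ2 hodd
  have hV (q : G ⧸ center G) : q ^ 2 = 1 := by
    induction q using QuotientGroup.induction_on with
    | H g => exact (QuotientGroup.eq_one_iff _).mpr (hses.pow_mem_center Nat.prime_two g)
  have hsq (g : G) : g ^ 2 = 1 := by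
    by_cases hg : g ∈ center G
    · exact hZ2 g hg
    obtain ⟨k, hk⟩ := MulAut.exists_pow_apply_eq_of_orderOf_eq hV (hσσ ▸ hodd)
      (by rw [hσσ, hσ, ← hindex, index_eq_card]) (v := (x : G ⧸ center G)) (w := g)
      (mt (QuotientGroup.eq_one_iff x).mp hxZ) (mt (QuotientGroup.eq_one_iff g).mp hg)
    rw [MulAut.quotient_pow_mk, QuotientGroup.eq] at hk
    exact pow_eq_one_of_inv_mul_mem_center hZ2 (by rw [← map_pow, hx, map_one]) hk
  exact hxZ (mem_center_of_forall_sq_eq_one hsq x)
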